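/- arXiv:1810.06201 — 5 statements merged into one kernel-verified Lean document; each statement's English description precedes it below -/
import Mathlib

section
/- Let p be a prime and n ≥ 3 an integer. Consider the vector space V = (Fin n → ZMod p) with the symmetric group S_n acting by permuting coordinates. Then every S_n-invariant ZMod p-subspace W of V is one of exactly the following four: (1) the zero subspace; (2) the line spanned by the all-ones vector (1,…,1); (3) the hyperplane {(x_1,…,x_n) : x_1 + ⋯ + x_n = 0}; (4) all of V. -/
/-- Let `p` be a prime and `n ≥ 3`. The `Sₙ`-invariant
`ZMod p`-subspaces of `Fin n → ZMod p` (with `Sₙ` acting by permuting coordinates,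
`(σ • x) i = x (σ⁻¹ i)`) are exactly: the zero subspace, the line spanned by the
all-ones vector, the hyperplane of vectors with coordinate sum zero, and the whole
space. -/
theorem stmt1 (p : ℕ) [Fact p.Prime] (n : ℕ) (hn : 3 ≤ n)
    (W : Submodule (ZMod p) (Fin n → ZMod p))
    (hW : ∀ σ : Equiv.Perm (Fin n), ∀ x ∈ W, (fun i => x (σ⁻¹ i)) ∈ W) :
    W = ⊥ ∨
    W = Submodule.span (ZMod p) {(fun _ => 1 : Fin n → ZMod p)} ∨
    (W : Set (Fin n → ZMod p)) = {x : Fin n → ZMod p | ∑ i, x i = 0} ∨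
    W = ⊤ := by
  by_cases hconst : ∀ x ∈ W, ∀ i j : Fin n, x i = x j
  · -- W ⊆ span of all-ones
    by_cases hbot : W = ⊥
    · exact Or.inl hbot
    · right; left
      obtain ⟨x, hxW, hx0⟩ := Submodule.exists_mem_ne_zero_of_ne_bot hbot
      have i0 : Fin n := ⟨0, by omega⟩
      have hxi0 : x i0 ≠ 0 := by
        intro h
        apply hx0
        funext k
        rw [hconst x hxW k i0, h]; rfl
      have hone : (fun _ => 1 : Fin n → ZMod p) ∈ W := by
        have : (x i0)⁻¹ • x ∈ W := W.smul_mem _ hxW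
        convert this using 1
        funext k
        simp only [Pi.smul_apply, smul_eq_mul, hconst x hxW k i0]
        rw [inv_mul_cancel₀ hxi0]
      apply le_antisymm
      · intro w hw
        have : w = (w i0) • (fun _ => 1 : Fin n → ZMod p) := by
          funext k; simp [hconst w hw k i0]
        rw [this]
        exact Submodule.smul_mem _ _ (Submodule.subset_span rfl)
      · rw [Submodule.span_le, Set.singleton_subset_iff]
        exact hone
  · push_neg at hconst
    obtain ⟨x, hxW, i, j, hxij⟩ := hconst
    have hij : i ≠ j := fun h => hxij (by rw [h])
    -- e_i - e_j ∈ W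
    have hdij : (Pi.single i 1 - Pi.single j 1 : Fin n → ZMod p) ∈ W := by
      have hσ : (fun m => x ((Equiv.swap i j)⁻¹ m)) ∈ W := hW _ x hxW
      have hsub : x - (fun m => x ((Equiv.swap i j)⁻¹ m)) ∈ W := W.sub_mem hxW hσ
      have hxd : x - (fun m => x ((Equiv.swap i j)⁻¹ m))
          = (x i - x j) • (Pi.single i 1 - Pi.single j 1 : Fin n → ZMod p) := by
        funext m
        simp only [Pi.sub_apply, Pi.smul_apply, smul_eq_mul, Equiv.swap_inv]
        by_cases hmi : m = i
        · subst hmi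
          simp [Equiv.swap_apply_left, Pi.single_apply, hij]
        · by_cases hmj : m = j
          · subst hmj
            simp [Equiv.swap_apply_right, Pi.single_apply, hij.symm]
          · rw [Equiv.swap_apply_of_ne_of_ne hmi hmj]
            simp [Pi.single_apply, hmi, hmj]
      have := W.smul_mem (x i - x j)⁻¹ hsub
      rw [hxd, smul_smul, inv_mul_cancel₀ (sub_ne_zero.mpr hxij), one_smul] at this
      exact this
    -- e_i - e_k ∈ W for every k
    have hik : ∀ k : Fin n, (Pi.single i 1 - Pi.single k 1 : Fin n → ZMod p) ∈ W := by
      intro k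
      by_cases hki : k = i
      · subst hki; rw [sub_self]; exact W.zero_mem
      · have hσ : (fun m => (Pi.single i 1 - Pi.single j 1 : Fin n → ZMod p)
            ((Equiv.swap j k)⁻¹ m)) ∈ W := hW _ _ hdij
        convert hσ using 1
        funext m
        simp only [Pi.sub_apply, Equiv.swap_inv]
        have hik' : Equiv.swap j k i = i := Equiv.swap_apply_of_ne_of_ne hij (Ne.symm hki)
        have h1 : Equiv.swap j k m = i ↔ m = i :=
          ⟨fun h => (Equiv.swap j k).injective (h.trans hik'.symm), fun h => h ▸ hik'⟩
        have h2 : Equiv.swap j k m = j ↔ m = k :=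
          ⟨fun h => (Equiv.swap j k).injective (h.trans (Equiv.swap_apply_right j k).symm),
           fun h => h ▸ Equiv.swap_apply_right j k⟩
        simp only [Pi.single_apply]
        rw [if_congr h1 rfl rfl, if_congr h2 rfl rfl]
    -- all differences e_a - e_b ∈ W
    have hab : ∀ a b : Fin n, (Pi.single a 1 - Pi.single b 1 : Fin n → ZMod p) ∈ W := by
      intro a b
      have : (Pi.single a 1 - Pi.single b 1 : Fin n → ZMod p)
          = (Pi.single i 1 - Pi.single b 1) - (Pi.single i 1 - Pi.single a 1) := by ring
      rw [this]
      exact W.sub_mem (hik b) (hik a)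
    -- the hyperplane is contained in W
    have hH : ∀ y : Fin n → ZMod p, (∑ m, y m = 0) → y ∈ W := by
      intro y hy
      have hy' : y = ∑ m, y m • (Pi.single m 1 - Pi.single i 1 : Fin n → ZMod p) := by
        have : ∑ m, y m • (Pi.single m 1 - Pi.single i 1 : Fin n → ZMod p)
            = (∑ m, y m • (Pi.single m (1 : ZMod p) : Fin n → ZMod p))
              - (∑ m, y m) • (Pi.single i 1 : Fin n → ZMod p) := by
          rw [Finset.sum_smul]
          rw [← Finset.sum_sub_distrib]
          congr 1
          funext m
          rw [smul_sub]
        rw [this, hy, zero_smul, sub_zero]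
        funext k
        simp [Pi.single_apply, Finset.sum_apply]
      rw [hy']
      exact Submodule.sum_mem _ fun m _ => W.smul_mem _ (hab m i)
    by_cases hsum : ∀ w ∈ W, ∑ m, w m = 0
    · right; right; left
      ext y
      exact ⟨fun hy => hsum y hy, fun hy => hH y hy⟩
    · right; right; right
      push_neg at hsum
      obtain ⟨z, hzW, hz⟩ := hsum
      rw [eq_top_iff]
      intro y _
      have h1 : y - ((∑ m, y m) * (∑ m, z m)⁻¹) • z ∈ W := by
        apply hH
        simp only [Pi.sub_apply, Pi.smul_apply, smul_eq_mul]
        rw [Finset.sum_sub_distrib, ← Finset.mul_sum]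
        rw [mul_assoc, inv_mul_cancel₀ hz, mul_one, sub_self]
      have := W.add_mem h1 (W.smul_mem ((∑ m, y m) * (∑ m, z m)⁻¹) hzW)
      simpa using this
end

section
/- Let G be a group, n ≥ 2 an integer, and H a subgroup of the direct power G^n. Suppose that for every pair of indices i ≠ j, the projection of H onto the product of the i-th and j-th coordinates is all of G × G. If H is a proper subgroup of G^n, then H is contained in a proper normal subgroup N of G^n such that the quotient G^n/N is abelian. -/
/-!
The subgroup `H ⊔ [Gⁿ, Gⁿ]` is normal with abelian quotient, so it suffices to show that it is
proper, i.e. that `H [Gⁿ, Gⁿ] = Gⁿ` forces `H = Gⁿ`. Write `x|_S` for the restriction of `x ∈ Gⁿ`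
to a set `S` of coordinates; we grow `S` one coordinate `M` at a time keeping `H|_S = G^S`.
The obstruction is the normal subgroup `K = {h M | h ∈ H, h|_S = 1}`: lifting a commutator of
`Gⁿ` to a commutator of `H` with the same restriction to `S` leaves an error in `K` at `M`, which
vanishes as soon as `G / K` is abelian. It is: if `h|_S` is supported at a single `i ∈ S`, then
`h M` commutes modulo `K` with the `M`-coordinate of every element of `H` trivial at `i`, and by
pairwise surjectivity those coordinates exhaust `G`; every `h|_S` is a product of such patterns.
-/

open scoped commutatorElement

namespace Subgroup

variable {ι G : Type*} [Group G]

theorem commutatorElement_mem {K : Subgroup G} {a b : G} (ha : a ∈ K) (hb : b ∈ K) :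
    ⁅a, b⁆ ∈ K :=
  K.mul_mem (K.mul_mem (K.mul_mem ha hb) (K.inv_mem ha)) (K.inv_mem hb)

theorem normal_of_commutator_le {N : Subgroup G} (h : _root_.commutator G ≤ N) : N.Normal :=
  commutator_top_left_le_iff.mp
    ((commutator_mono le_rfl le_top).trans (_root_.commutator_def G ▸ h))

theorem le_upperCentralSeriesStep (K : Subgroup G) [K.Normal] : K ≤ upperCentralSeriesStep K :=
  fun x hx y => by
    simpa [commutatorElement_def, mul_assoc] using
      K.mul_mem hx (‹K.Normal›.conj_mem _ (K.inv_mem hx) y)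

variable (H : Subgroup (ι → G))

/-- `H.realizedOn S = ⊤` says that `H` projects onto the coordinates in `S`. -/
def realizedOn (S : Set ι) : Subgroup (ι → G) where
  carrier := {x | ∃ h ∈ H, ∀ i ∈ S, h i = x i}
  one_mem' := ⟨1, H.one_mem, fun _ _ => rfl⟩
  mul_mem' := by
    rintro x y ⟨a, ha, hax⟩ ⟨b, hb, hby⟩
    exact ⟨a * b, H.mul_mem ha hb, fun i hi => by simp [hax i hi, hby i hi]⟩
  inv_mem' := by
    rintro x ⟨a, ha, hax⟩
    exact ⟨a⁻¹, H.inv_mem ha, fun i hi => by simp [hax i hi]⟩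

variable {H}

theorem le_realizedOn (S : Set ι) : H ≤ H.realizedOn S :=
  fun h hh => ⟨h, hh, fun _ _ => rfl⟩

theorem realizedOn_empty : H.realizedOn ∅ = ⊤ :=
  eq_top_iff.mpr fun _ _ => ⟨1, H.one_mem, by simp⟩

theorem realizedOn_univ : H.realizedOn Set.univ = H :=
  le_antisymm (fun _ ⟨_, hh, hx⟩ => funext (fun i => hx i trivial) ▸ hh) (le_realizedOn _)

variable (H)

def coordFiber (S : Set ι) (M : ι) : Subgroup G :=
  (H ⊓ pi S fun _ => ⊥).map (Pi.evalMonoidHom (fun _ => G) M)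

variable {H}

theorem mem_coordFiber {S : Set ι} {M : ι} {g : G} :
    g ∈ H.coordFiber S M ↔ ∃ h ∈ H, (∀ i ∈ S, h i = 1) ∧ h M = g := by
  simp [coordFiber, mem_pi, and_assoc]

theorem coordFiber_normal {S : Set ι} {M : ι} (hM : ∀ g : G, ∃ h ∈ H, h M = g) :
    (H.coordFiber S M).Normal where
  conj_mem g hg x := by
    obtain ⟨h, hh, hhS, rfl⟩ := mem_coordFiber.mp hg
    obtain ⟨f, hf, rfl⟩ := hM x
    exact mem_coordFiber.mpr ⟨f * h * f⁻¹, H.mul_mem (H.mul_mem hf hh) (H.inv_mem hf),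
      fun i hi => by simp [hhS i hi], rfl⟩

theorem commutatorElement_mem_coordFiber {S A B : Set ι} (hS : S ⊆ A ∪ B) (M : ι)
    {a b : ι → G} (ha : a ∈ H) (hb : b ∈ H) (haA : ∀ i ∈ A, a i = 1) (hbB : ∀ i ∈ B, b i = 1) :
    ⁅a M, b M⁆ ∈ H.coordFiber S M := by
  refine mem_coordFiber.mpr ⟨⁅a, b⁆, commutatorElement_mem ha hb, fun i hi => ?_, rfl⟩
  rcases hS hi with hiA | hiB
  · simp [commutatorElement_def, haA i hiA]
  · simp [commutatorElement_def, hbB i hiB]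

variable {S : Set ι} {M : ι}
    (hpair : ∀ i j, i ≠ j → ∀ g₁ g₂ : G, ∃ f ∈ H, f i = g₁ ∧ f j = g₂)

include hpair in
theorem coord_mem_upperCentralSeriesStep_coordFiber [Finite ι] [(H.coordFiber S M).Normal]
    (hS : H.realizedOn S = ⊤) (hMS : M ∉ S) {h : ι → G} (hh : h ∈ H) :
    h M ∈ upperCentralSeriesStep (H.coordFiber S M) := by
  classical
  set K := H.coordFiber S M
  set A := H ⊓ (upperCentralSeriesStep K).comap (Pi.evalMonoidHom (fun _ => G) M)
  -- `A` realizes every pattern on `S` supported at one coordinate, hence every pattern.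
  have hA : A.realizedOn S = ⊤ := by
    refine eq_top_iff.mpr fun x _ => pi_mem_of_mulSingle_mem x fun i => ?_
    by_cases hi : i ∈ S
    · obtain ⟨a, ha, hax⟩ := (eq_top_iff' _).mp hS (Pi.mulSingle i (x i))
      refine ⟨a, ⟨ha, fun y => ?_⟩, hax⟩
      obtain ⟨b, hb, hbi, rfl⟩ := hpair i M (ne_of_mem_of_not_mem hi hMS) 1 y
      refine commutatorElement_mem_coordFiber (A := S \ {i}) (B := {i}) (by simp) M ha hb
        (fun j hj => ?_) (by simpa)
      rw [hax j hj.1]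
      exact Pi.mulSingle_eq_of_ne hj.2 _
    · exact ⟨1, A.one_mem, fun j hj => by simp [ne_of_mem_of_not_mem hj hi]⟩
  obtain ⟨a, ⟨ha, haZ⟩, hah⟩ := (eq_top_iff' _).mp hA h
  have hK : (a⁻¹ * h) M ∈ K := mem_coordFiber.mpr
    ⟨a⁻¹ * h, H.mul_mem (H.inv_mem ha) hh, fun i hi => by simp [hah i hi], rfl⟩
  simpa only [Pi.evalMonoidHom_apply, Pi.mul_apply, Pi.inv_apply, mul_inv_cancel_left] using
    (upperCentralSeriesStep K).mul_mem haZ (le_upperCentralSeriesStep K hK)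

include hpair in
theorem commutatorElement_mem_coordFiber_of_realizedOn [Finite ι] [Nontrivial ι]
    (hS : H.realizedOn S = ⊤) (hMS : M ∉ S) (g₁ g₂ : G) : ⁅g₁, g₂⁆ ∈ H.coordFiber S M := by
  have hM (g : G) : ∃ h ∈ H, h M = g := by
    obtain ⟨j, hj⟩ := exists_ne M
    obtain ⟨h, hh, hhM, -⟩ := hpair M j hj.symm g 1
    exact ⟨h, hh, hhM⟩
  have := coordFiber_normal (S := S) hM
  obtain ⟨h, hh, rfl⟩ := hM g₁
  exact coord_mem_upperCentralSeriesStep_coordFiber hpair hS hMS hh g₂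

theorem realizedOn_insert_eq_top (htop : H ⊔ _root_.commutator (ι → G) = ⊤)
    (hS : H.realizedOn S = ⊤) (hK : ∀ g₁ g₂ : G, ⁅g₁, g₂⁆ ∈ H.coordFiber S M) :
    H.realizedOn (insert M S) = ⊤ := by
  rw [eq_top_iff, ← htop, _root_.commutator_def, sup_le_iff]
  refine ⟨le_realizedOn _, commutator_le.mpr fun a _ b _ => ?_⟩
  obtain ⟨α, hα, hαa⟩ := (eq_top_iff' _).mp hS a
  obtain ⟨β, hβ, hβb⟩ := (eq_top_iff' _).mp hS b
  obtain ⟨w, hw, hwS, hwM⟩ :=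
    mem_coordFiber.mp (mul_mem (inv_mem (hK (α M) (β M))) (hK (a M) (b M)))
  refine ⟨⁅α, β⁆ * w, H.mul_mem (commutatorElement_mem hα hβ) hw, ?_⟩
  rintro i (rfl | hi)
  · change ⁅α i, β i⁆ * w i = ⁅a i, b i⁆
    rw [hwM, mul_inv_cancel_left]
  · simp [hαa i hi, hβb i hi, hwS i hi, commutatorElement_def]

include hpair in
theorem eq_top_of_sup_commutator_eq_top [Finite ι] [Nontrivial ι]
    (htop : H ⊔ _root_.commutator (ι → G) = ⊤) : H = ⊤ := by
  rw [← realizedOn_univ (H := H)]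
  induction Set.univ, Set.toFinite (Set.univ : Set ι) using Set.Finite.induction_on with
  | empty => exact realizedOn_empty
  | insert hMS _ hS =>
    exact realizedOn_insert_eq_top htop hS
      (commutatorElement_mem_coordFiber_of_realizedOn hpair hS hMS)

end Subgroup

/-- Let `G` be a group, `n ≥ 2`, and `H` a subgroup of `Gⁿ = (Fin n → G)`.
If for all `i ≠ j` the projection of `H` to the `(i,j)`-coordinates is all of `G × G`,
and `H` is a proper subgroup, then `H` is contained in a proper normal subgroup `N` of `Gⁿ`
with abelian quotient (equivalently, `N` contains all commutators of `Gⁿ`). -/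
theorem stmt2 (G : Type*) [Group G] (n : ℕ) (hn : 2 ≤ n)
    (H : Subgroup (Fin n → G))
    (hproj : ∀ i j : Fin n, i ≠ j → ∀ g₁ g₂ : G, ∃ f ∈ H, f i = g₁ ∧ f j = g₂)
    (hH : H ≠ ⊤) :
    ∃ N : Subgroup (Fin n → G), N.Normal ∧ N ≠ ⊤ ∧ H ≤ N ∧
      ∀ a b : Fin n → G, ⁅a, b⁆ ∈ N := by
  have : Nontrivial (Fin n) := Fin.nontrivial_iff_two_le.mpr hn
  have hcomm : commutator (Fin n → G) ≤ H ⊔ commutator (Fin n → G) := le_sup_right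
  refine ⟨H ⊔ commutator (Fin n → G), Subgroup.normal_of_commutator_le hcomm,
    fun htop => hH (Subgroup.eq_top_of_sup_commutator_eq_top hproj htop), le_sup_left,
    fun a b => hcomm ?_⟩
  exact Subgroup.commutator_mem_commutator (Subgroup.mem_top a) (Subgroup.mem_top b)
end

section
/- Let G be a finite group and n ≥ 1. Two elements (ξ,σ) and (ζ,ρ) of the wreath product G ≀ S_n = (Fin n → G) ⋊ Perm(Fin n) are conjugate in G ≀ S_n if and only if the following multisets coincide: the multiset, indexed by the orbits O of σ on Fin n, of pairs (|O|, conjugacy class in G of the cycle product of ξ along O), and the corresponding multiset for (ζ,ρ). (The conjugacy class of the cycle product of ξ along an orbit O does not depend on the choice of base point x ∈ O, so these multisets are well defined.) -/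
/-!
A conjugator `(η, τ)` of `(ξ, σ)` into `(ζ, ρ)` has `τ σ τ⁻¹ = ρ`, so `τ` carries the cycles of `σ`
onto those of `ρ`, preserving lengths, while `ζ x = η x · ξ (τ⁻¹ x) · η (ρ⁻¹ x)⁻¹`. Along a cycle
the factors of `η` telescope, so the cycle product changes only by a conjugation.
Conversely, a length- and class-preserving bijection of cycles gives `τ` by matching base points
and powers of `σ` and `ρ`; on each cycle, `η` is then built from the partial cycle products of
`ξ` and `ζ` and a conjugator between the full cycle products.
-/

/-- The cycle product of `ξ : Fin n → G` along the orbit of `x` under `σ`: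
if `d ≥ 1` is the size of the orbit of `x` (the minimal period of `x` under `σ`),
this is `ξ(σ^{d-1} x) · ξ(σ^{d-2} x) ⋯ ξ(σ x) · ξ(x)`. -/
noncomputable def cycleProd {G : Type*} [Group G] {n : ℕ} (σ : Equiv.Perm (Fin n)) (ξ : Fin n → G)
    (x : Fin n) : G :=
  (((List.range (Function.minimalPeriod (⇑σ) x)).map (fun k => ξ ((σ ^ k) x))).reverse).prod

/-- The action of `Perm (Fin n)` on `Fin n → G` by permuting coordinates:
`(σ • ξ) x = ξ (σ⁻¹ x)`. -/
def wreathAction (G : Type*) [Group G] (n : ℕ) :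
    Equiv.Perm (Fin n) →* MulAut (Fin n → G) :=
  MonoidHom.mk' (fun σ => MulEquiv.arrowCongr (σ : Fin n ≃ Fin n) (MulEquiv.refl G))
    (fun σ τ => by
      ext ξ x
      rfl)

/-- The multiset, indexed by the orbits `O` of `σ` on `Fin n`, of pairs
`(|O|, conjugacy class of the cycle product of ξ along O)`.  Each orbit is represented
by `Quotient.out`, a choice of base point; by the well-definedness noted in the paper
the resulting pair is independent of this choice. -/
noncomputable def orbitData {G : Type*} [Group G] {n : ℕ} (σ : Equiv.Perm (Fin n))
    (ξ : Fin n → G) : Multiset (ℕ × ConjClasses G) :=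
  letI : Fintype (Quotient (Equiv.Perm.SameCycle.setoid σ)) := Fintype.ofFinite _
  (Finset.univ : Finset (Quotient (Equiv.Perm.SameCycle.setoid σ))).val.map
    (fun q => (Function.minimalPeriod (⇑σ) q.out, ConjClasses.mk (cycleProd σ ξ q.out)))

open Equiv Equiv.Perm Function

section ProdRangeRev

variable {G : Type*} [Group G]

def prodRangeRev (f : ℕ → G) (k : ℕ) : G := ((List.range k).map f).reverse.prod

@[simp] lemma prodRangeRev_zero (f : ℕ → G) : prodRangeRev f 0 = 1 := rfl

lemma prodRangeRev_succ (f : ℕ → G) (k : ℕ) :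
    prodRangeRev f (k + 1) = f k * prodRangeRev f k := by
  simp [prodRangeRev, List.range_succ]

lemma prodRangeRev_add_of_periodic {f : ℕ → G} {d : ℕ} (hf : Periodic f d) (m : ℕ) :
    prodRangeRev f (m + d) = prodRangeRev f m * prodRangeRev f d := by
  induction m with
  | zero => simp
  | succ m ih => rw [Nat.add_right_comm, prodRangeRev_succ, ih, prodRangeRev_succ, hf, mul_assoc]

lemma prodRangeRev_telescope (a b : ℕ → G) (d : ℕ) :
    prodRangeRev (fun k => a (k + 1) * b k * (a k)⁻¹) d = a d * prodRangeRev b d * (a 0)⁻¹ := by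
  induction d with
  | zero => simp
  | succ d ih => rw [prodRangeRev_succ, ih, prodRangeRev_succ]; group

end ProdRangeRev

namespace Equiv.Perm

variable {α : Type*}

lemma pow_apply_eq_pow_apply_iff (σ : Perm α) (x : α) {i j : ℕ} :
    (σ ^ i) x = (σ ^ j) x ↔ i ≡ j [MOD minimalPeriod σ x] := by
  rw [Nat.modEq_iff_dvd]
  refine Iff.trans ?_ (MulAction.zpow_smul_eq_iff_minimalPeriod_dvd (a := σ) (b := x))
  rw [sub_eq_neg_add, zpow_add, mul_smul, zpow_neg, inv_smul_eq_iff, zpow_natCast, zpow_natCast,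
    Perm.smul_def, Perm.smul_def, eq_comm]

lemma pow_minimalPeriod_apply (σ : Perm α) (x : α) : (σ ^ minimalPeriod σ x) x = x := by
  rw [← iterate_eq_pow]
  exact isPeriodicPt_minimalPeriod σ x

lemma periodic_pow_apply (σ : Perm α) (x : α) :
    Periodic (fun k => (σ ^ k) x) (minimalPeriod σ x) := fun k => by
  simp only [pow_add, mul_apply, pow_minimalPeriod_apply]

lemma mk_pow_apply (σ : Perm α) (x : α) (k : ℕ) :
    (⟦(σ ^ k) x⟧ : Quotient (SameCycle.setoid σ)) = ⟦x⟧ :=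
  Quotient.sound (sameCycle_pow_left.2 (SameCycle.refl σ x))

lemma exists_pow_apply_out_eq [Finite α] (σ : Perm α) (x : α) :
    ∃ k : ℕ, (σ ^ k) (⟦x⟧ : Quotient (SameCycle.setoid σ)).out = x :=
  (SameCycle.exists_pow_eq' (Quotient.mk_out (s := SameCycle.setoid σ) x)).imp fun _ h => h.2

lemma exists_eq_pow_apply_out [Finite α] (σ : Perm α) (x : α) :
    ∃ (q : Quotient (SameCycle.setoid σ)) (k : ℕ), (σ ^ k) q.out = x :=
  ⟨_, exists_pow_apply_out_eq σ x⟩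

lemma SameCycle.eq_of_forall_apply_eq [Finite α] {β : Type*} {σ : Perm α} {f : α → β}
    (hf : ∀ x, f (σ x) = f x) {x y : α} (h : SameCycle σ x y) : f x = f y := by
  obtain ⟨k, -, rfl⟩ := h.exists_pow_eq'
  clear h
  induction k with
  | zero => rfl
  | succ k ih => rw [pow_succ', mul_apply, hf, ih]

lemma exists_apply_pow_apply_out_eq [Finite α] {β : Type*} (σ : Perm α)
    (f : Quotient (SameCycle.setoid σ) → ℕ → β)
    (hf : ∀ q, Periodic (f q) (minimalPeriod σ q.out)) :
    ∃ g : α → β, ∀ q k, g ((σ ^ k) q.out) = f q k := by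
  choose k hk using exists_pow_apply_out_eq σ
  refine ⟨fun x => f ⟦x⟧ (k x), fun q j => ?_⟩
  have hq : (⟦(σ ^ j) q.out⟧ : Quotient (SameCycle.setoid σ)) = q := by
    rw [mk_pow_apply, Quotient.out_eq]
  have hkj := hk ((σ ^ j) q.out)
  rw [hq, pow_apply_eq_pow_apply_iff] at hkj
  simp only [hq]
  rw [← (hf q).map_mod_nat, hkj, (hf q).map_mod_nat]

lemma SemiconjBy.pow_apply {τ σ ρ : Perm α} (hτ : SemiconjBy τ σ ρ) (k : ℕ) (x : α) :
    (ρ ^ k) (τ x) = τ ((σ ^ k) x) := by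
  rw [← mul_apply, ← (hτ.pow_right k).eq, mul_apply]

lemma SemiconjBy.minimalPeriod_apply {τ σ ρ : Perm α} (hτ : SemiconjBy τ σ ρ) (x : α) :
    minimalPeriod ρ (τ x) = minimalPeriod σ x := by
  refine minimalPeriod_eq_minimalPeriod_iff.2 fun k => ?_
  simp only [IsPeriodicPt, IsFixedPt, iterate_eq_pow, hτ.pow_apply, τ.injective.eq_iff]

lemma SemiconjBy.sameCycle_apply_iff {τ σ ρ : Perm α} (hτ : SemiconjBy τ σ ρ) {x y : α} :
    SameCycle ρ (τ x) (τ y) ↔ SameCycle σ x y := by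
  rw [eq_mul_inv_of_mul_eq hτ.eq.symm, sameCycle_conj, coe_inv, symm_apply_apply, symm_apply_apply]

def SemiconjBy.cyclesEquiv {τ σ ρ : Perm α} (hτ : SemiconjBy τ σ ρ) :
    Quotient (SameCycle.setoid σ) ≃ Quotient (SameCycle.setoid ρ) :=
  Quotient.congr τ fun _ _ => hτ.sameCycle_apply_iff.symm

lemma SemiconjBy.sameCycle_cyclesEquiv_out {τ σ ρ : Perm α} (hτ : SemiconjBy τ σ ρ)
    (q : Quotient (SameCycle.setoid σ)) : SameCycle ρ (τ q.out) (hτ.cyclesEquiv q).out := by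
  conv_rhs => rw [← Quotient.out_eq q]
  exact SameCycle.symm (Quotient.mk_out (s := SameCycle.setoid ρ) (τ q.out))

lemma exists_semiconjBy_of_cycles_equiv [Finite α] {σ ρ : Perm α}
    (e : Quotient (SameCycle.setoid σ) ≃ Quotient (SameCycle.setoid ρ))
    (he : ∀ q, minimalPeriod ρ (e q).out = minimalPeriod σ q.out) :
    ∃ τ : Perm α, SemiconjBy τ σ ρ ∧ ∀ q, τ q.out = (e q).out := by
  obtain ⟨t, ht⟩ := exists_apply_pow_apply_out_eq σ (fun q k => (ρ ^ k) (e q).out)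
    fun q => he q ▸ periodic_pow_apply ρ (e q).out
  have hinj : Injective t := by
    intro x y hxy
    obtain ⟨q, i, rfl⟩ := exists_eq_pow_apply_out σ x
    obtain ⟨p, j, rfl⟩ := exists_eq_pow_apply_out σ y
    rw [ht, ht] at hxy
    have hq := congrArg (fun z => (⟦z⟧ : Quotient (SameCycle.setoid ρ))) hxy
    simp only [mk_pow_apply, Quotient.out_eq, e.injective.eq_iff] at hq
    rw [hq] at hxy ⊢
    rwa [pow_apply_eq_pow_apply_iff, he, ← pow_apply_eq_pow_apply_iff] at hxy
  refine ⟨ofBijective t (Finite.injective_iff_bijective.1 hinj), ?_, fun q => by simpa using ht q 0⟩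
  ext x
  obtain ⟨q, k, rfl⟩ := exists_eq_pow_apply_out σ x
  simp only [mul_apply, ofBijective_apply, ht]
  rw [← mul_apply, ← pow_succ', ht, pow_succ', mul_apply]

end Equiv.Perm

lemma Multiset.map_univ_val_eq_map_univ_val_iff {α β γ : Type*} [Fintype α] [Fintype β]
    (f : α → γ) (g : β → γ) :
    Finset.univ.val.map f = Finset.univ.val.map g ↔ ∃ e : α ≃ β, ∀ a, g (e a) = f a := by
  classical
  constructor
  · intro h
    have hcard : ∀ c, Fintype.card {a // f a = c} = Fintype.card {b // g b = c} := fun c => by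
      convert congrArg (Multiset.count c) h using 1 <;>
        simp [Multiset.count_map, Fintype.card_subtype, Finset.card_def, Finset.filter_val, eq_comm]
    exact ⟨Equiv.ofFiberEquiv fun c => Fintype.equivOfCardEq (hcard c), Equiv.ofFiberEquiv_map _⟩
  · rintro ⟨e, he⟩
    rw [← Multiset.map_univ_val_equiv e, Multiset.map_map]
    exact Multiset.map_congr rfl fun a _ => (he a).symm

section CycleProd

variable {G : Type*} [Group G] {n : ℕ}

lemma cycleProd_eq_prodRangeRev (σ : Perm (Fin n)) (ξ : Fin n → G) (x : Fin n) :
    cycleProd σ ξ x = prodRangeRev (fun k => ξ ((σ ^ k) x)) (minimalPeriod σ x) := rfl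

lemma cycleProd_comp_inv_apply {τ σ ρ : Perm (Fin n)} (hτ : SemiconjBy τ σ ρ)
    (ξ : Fin n → G) (x : Fin n) : cycleProd ρ (ξ ∘ ⇑τ⁻¹) (τ x) = cycleProd σ ξ x := by
  simp only [cycleProd_eq_prodRangeRev, hτ.minimalPeriod_apply, comp_apply, hτ.pow_apply,
    coe_inv, symm_apply_apply]

lemma isConj_cycleProd_of_cohomologous {σ : Perm (Fin n)} {ξ ζ η : Fin n → G}
    (h : ∀ x, η x * ξ x = ζ x * η (σ⁻¹ x)) (x : Fin n) :
    IsConj (cycleProd σ ξ x) (cycleProd σ ζ x) := by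
  set a : ℕ → G := fun k => η (σ⁻¹ ((σ ^ k) x))
  have hζ : ∀ k, ζ ((σ ^ k) x) = a (k + 1) * ξ ((σ ^ k) x) * (a k)⁻¹ := fun k => by
    simp only [a, pow_succ', mul_apply, coe_inv, symm_apply_apply, h, mul_inv_cancel_right]
  have hperiod : a (minimalPeriod σ x) = a 0 := by
    simp only [a, pow_minimalPeriod_apply, pow_zero, one_apply]
  refine isConj_iff.2 ⟨a 0, ?_⟩
  rw [cycleProd_eq_prodRangeRev, cycleProd_eq_prodRangeRev, funext hζ, prodRangeRev_telescope,
    hperiod]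

lemma exists_cohomologous_of_isConj_cycleProd {σ : Perm (Fin n)} {ξ ζ : Fin n → G}
    (h : ∀ q : Quotient (SameCycle.setoid σ), IsConj (cycleProd σ ξ q.out) (cycleProd σ ζ q.out)) :
    ∃ η : Fin n → G, ∀ x, η x * ξ x = ζ x * η (σ⁻¹ x) := by
  choose c hc using fun q => isConj_iff.1 (h q)
  -- `η ((σ ^ k) q.out) = Z q (k + 1) * c q * (X q (k + 1))⁻¹`: this is periodic in `k` because
  -- `c q` conjugates the full cycle product of `ξ` into that of `ζ`.
  set X := fun q k => prodRangeRev (fun j => ξ ((σ ^ j) (Quotient.out q))) k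
  set Z := fun q k => prodRangeRev (fun j => ζ ((σ ^ j) (Quotient.out q))) k
  obtain ⟨η, hη⟩ := exists_apply_pow_apply_out_eq σ
    (fun q k => Z q (k + 1) * c q * (X q (k + 1))⁻¹) fun q k => by
      have hX : X q (k + 1 + _) = X q (k + 1) * cycleProd σ ξ q.out :=
        prodRangeRev_add_of_periodic ((periodic_pow_apply σ q.out).comp ξ) (k + 1)
      have hZ : Z q (k + 1 + _) = Z q (k + 1) * cycleProd σ ζ q.out :=
        prodRangeRev_add_of_periodic ((periodic_pow_apply σ q.out).comp ζ) (k + 1)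
      dsimp only
      rw [Nat.add_right_comm, hX, hZ, ← hc q]
      group
  refine ⟨η, fun x => ?_⟩
  obtain ⟨q, k, hk⟩ := exists_eq_pow_apply_out σ (σ⁻¹ x)
  obtain rfl : x = (σ ^ (k + 1)) q.out := by
    rw [pow_succ', mul_apply, hk, coe_inv, apply_symm_apply]
  have hprev : σ⁻¹ ((σ ^ (k + 1)) q.out) = (σ ^ k) q.out := by
    rw [pow_succ', mul_apply, coe_inv, symm_apply_apply]
  rw [hprev, hη, hη]
  simp only [X, Z, prodRangeRev_succ]
  group

noncomputable def cycleData (σ : Perm (Fin n)) (ξ : Fin n → G) (x : Fin n) : ℕ × ConjClasses G :=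
  (minimalPeriod σ x, ConjClasses.mk (cycleProd σ ξ x))

lemma cycleData_apply_of_semiconjBy {τ σ ρ : Perm (Fin n)} {ξ ζ η : Fin n → G}
    (hτ : SemiconjBy τ σ ρ) (hη : ∀ x, η x * ξ (τ⁻¹ x) = ζ x * η (ρ⁻¹ x)) (x : Fin n) :
    cycleData ρ ζ (τ x) = cycleData σ ξ x := by
  have hconj := isConj_cycleProd_of_cohomologous (ξ := ξ ∘ ⇑τ⁻¹) hη (τ x)
  rw [cycleProd_comp_inv_apply hτ] at hconj
  rw [cycleData, cycleData, hτ.minimalPeriod_apply, ConjClasses.mk_eq_mk_iff_isConj.2 hconj]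

lemma Equiv.Perm.SameCycle.cycleData_eq {σ : Perm (Fin n)} (ξ : Fin n → G) {x y : Fin n}
    (h : SameCycle σ x y) : cycleData σ ξ x = cycleData σ ξ y :=
  h.eq_of_forall_apply_eq <|
    cycleData_apply_of_semiconjBy (η := ξ) (Commute.refl σ) fun _ => Eq.refl _

lemma orbitData_eq_orbitData_iff {σ ρ : Perm (Fin n)} {ξ ζ : Fin n → G} :
    orbitData σ ξ = orbitData ρ ζ ↔
      ∃ e : Quotient (SameCycle.setoid σ) ≃ Quotient (SameCycle.setoid ρ),
        ∀ q, cycleData ρ ζ (e q).out = cycleData σ ξ q.out := by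
  let _ := Fintype.ofFinite (Quotient (SameCycle.setoid σ))
  let _ := Fintype.ofFinite (Quotient (SameCycle.setoid ρ))
  exact Multiset.map_univ_val_eq_map_univ_val_iff _ _

lemma wreathAction_apply (τ : Perm (Fin n)) (ξ : Fin n → G)
    (x : Fin n) : wreathAction G n τ ξ x = ξ (τ⁻¹ x) := rfl

lemma isConj_wreath_iff {ξ ζ : Fin n → G} {σ ρ : Perm (Fin n)} :
    IsConj (⟨ξ, σ⟩ : (Fin n → G) ⋊[wreathAction G n] Perm (Fin n)) ⟨ζ, ρ⟩ ↔
      ∃ (η : Fin n → G) (τ : Perm (Fin n)),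
        SemiconjBy τ σ ρ ∧ ∀ x, η x * ξ (τ⁻¹ x) = ζ x * η (ρ⁻¹ x) := by
  simp only [isConj_iff, mul_inv_eq_iff_eq_mul, SemidirectProduct.ext_iff,
    SemidirectProduct.mul_left, SemidirectProduct.mul_right, funext_iff, Pi.mul_apply,
    wreathAction_apply, SemiconjBy]
  exact ⟨fun ⟨c, hleft, hright⟩ => ⟨c.left, c.right, hright, hleft⟩,
    fun ⟨η, τ, hτ, hη⟩ => ⟨⟨η, τ⟩, hη, hτ⟩⟩

end CycleProd

theorem stmt4_general {G : Type*} [Group G] {n : ℕ}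
    (ξ ζ : Fin n → G) (σ ρ : Equiv.Perm (Fin n)) :
    IsConj (⟨ξ, σ⟩ : (Fin n → G) ⋊[wreathAction G n] Equiv.Perm (Fin n)) ⟨ζ, ρ⟩ ↔
      orbitData σ ξ = orbitData ρ ζ := by
  rw [isConj_wreath_iff, orbitData_eq_orbitData_iff]
  constructor
  · rintro ⟨η, τ, hτ, hη⟩
    refine ⟨hτ.cyclesEquiv, fun q => ?_⟩
    rw [← (hτ.sameCycle_cyclesEquiv_out q).cycleData_eq,
      cycleData_apply_of_semiconjBy hτ hη]
  · rintro ⟨e, he⟩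
    obtain ⟨τ, hτ, hτe⟩ := exists_semiconjBy_of_cycles_equiv e fun q => congrArg Prod.fst (he q)
    obtain ⟨η, hη⟩ := exists_cohomologous_of_isConj_cycleProd (ξ := ξ ∘ ⇑τ⁻¹) (ζ := ζ) fun r => by
      obtain ⟨q, rfl⟩ := e.surjective r
      rw [← hτe, cycleProd_comp_inv_apply hτ, hτe]
      exact ConjClasses.mk_eq_mk_iff_isConj.1 (congrArg Prod.snd (he q)).symm
    exact ⟨η, τ, hτ, hη⟩

/-- Two elements `(ξ, σ)` and `(ζ, ρ)` of the wreath product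
`G ≀ Sₙ = (Fin n → G) ⋊ Perm (Fin n)` are conjugate if and only if the multisets,
indexed by orbits, of pairs (orbit size, conjugacy class of the cycle product along the
orbit) coincide. -/
theorem stmt4 {G : Type*} [Group G] [Finite G] {n : ℕ} (hn : 1 ≤ n)
    (ξ ζ : Fin n → G) (σ ρ : Equiv.Perm (Fin n)) :
    IsConj (⟨ξ, σ⟩ : (Fin n → G) ⋊[wreathAction G n] Equiv.Perm (Fin n)) ⟨ζ, ρ⟩ ↔
      orbitData σ ξ = orbitData ρ ζ :=
  stmt4_general ξ ζ σ ρ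
end

section
/- For every integer n ≥ 1 and every element x of a commutative ring R, one has Σ_{σ ∈ Perm(Fin n)} x^{c(σ)} = x(x+1)(x+2)⋯(x+n−1), where c(σ) denotes the number of orbits of σ on Fin n (fixed points counted as orbits). That is, the sum over all permutations of x raised to the number of cycles equals the rising factorial ∏_{i=0}^{n−1}(x + i). -/
open Equiv Equiv.Perm

namespace Stmt6Aux

variable {n : ℕ}

/-- Number of cycles (orbits) of a permutation. -/
noncomputable def cyc {α : Type*} (σ : Perm α) : ℕ := Nat.card (Quotient (SameCycle.setoid σ))

lemma tau_succ (p : Fin (n + 1)) (e : Perm (Fin n)) (x : Fin n) :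
    (Equiv.Perm.decomposeFin.symm (p, e)) x.succ =
      if (e x).succ = p then 0 else (e x).succ := by
  rw [Equiv.Perm.decomposeFin_symm_apply_succ, swap_apply_def]
  split_ifs with h1 h2 h2
  · exact absurd h1 (Fin.succ_ne_zero _)
  · exact absurd h1 (Fin.succ_ne_zero _)
  · rfl
  · rfl

lemma step_sameCycle (p : Fin (n + 1)) (e : Perm (Fin n)) (x : Fin n) :
    (Equiv.Perm.decomposeFin.symm (p, e)).SameCycle x.succ (e x).succ := by
  set τ := Equiv.Perm.decomposeFin.symm (p, e) with hτ
  by_cases h : (e x).succ = p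
  · have h1 : τ x.succ = 0 := by rw [tau_succ, if_pos h]
    have h2 : τ 0 = (e x).succ := by
      rw [Equiv.Perm.decomposeFin_symm_apply_zero, h]
    have c1 : τ.SameCycle x.succ 0 := ⟨1, by simpa using h1⟩
    have c2 : τ.SameCycle (0 : Fin (n + 1)) (e x).succ := ⟨1, by simpa using h2⟩
    exact c1.trans c2
  · have h1 : τ x.succ = (e x).succ := by rw [tau_succ, if_neg h]
    exact ⟨1, by simpa using h1⟩

lemma succ_sameCycle (p : Fin (n + 1)) (e : Perm (Fin n)) {x y : Fin n}
    (h : e.SameCycle x y) :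
    (Equiv.Perm.decomposeFin.symm (p, e)).SameCycle x.succ y.succ := by
  obtain ⟨i, -, hi⟩ := h.exists_pow_eq'
  clear h
  induction i generalizing x with
  | zero => simp only [pow_zero, one_apply] at hi; subst hi; exact SameCycle.rfl
  | succ j ih =>
    have hi' : (e ^ j) (e x) = y := by
      rw [← hi, pow_succ, mul_apply]
    exact (step_sameCycle p e x).trans (ih hi')

lemma sameCycle_of_succ (p : Fin (n + 1)) (e : Perm (Fin n)) {x y : Fin n}
    (h : (Equiv.Perm.decomposeFin.symm (p, e)).SameCycle x.succ y.succ) :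
    e.SameCycle x y := by
  set τ := Equiv.Perm.decomposeFin.symm (p, e) with hτ
  obtain ⟨i, -, hi⟩ := h.exists_pow_eq'
  clear h
  induction i using Nat.strong_induction_on generalizing x with
  | _ i ih =>
    match i with
    | 0 =>
      simp only [pow_zero, one_apply] at hi
      exact (Fin.succ_injective _ hi) ▸ SameCycle.rfl
    | Nat.succ j =>
      have hi1 : (τ ^ j) (τ x.succ) = y.succ := by
        rw [← hi, pow_succ, mul_apply]
      by_cases hc : (e x).succ = p
      · have h1 : τ x.succ = 0 := by rw [tau_succ, if_pos hc]
        rw [h1] at hi1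
        match j, hi1 with
        | 0, hi1 => exact absurd hi1.symm (Fin.succ_ne_zero _)
        | Nat.succ k, hi1 =>
          have h2 : τ (0 : Fin (n + 1)) = (e x).succ := by
            rw [Equiv.Perm.decomposeFin_symm_apply_zero, hc]
          have hi2 : (τ ^ k) ((e x).succ) = y.succ := by
            rw [← h2, ← mul_apply, ← pow_succ]; exact hi1
          have := ih k (by omega) hi2
          exact (sameCycle_apply_right.2 SameCycle.rfl).trans this
      · have h1 : τ x.succ = (e x).succ := by rw [tau_succ, if_neg hc]
        rw [h1] at hi1
        have := ih j (by omega) hi1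
        exact (sameCycle_apply_right.2 SameCycle.rfl).trans this

lemma cyc_decompose (p : Fin (n + 1)) (e : Perm (Fin n)) :
    cyc (Equiv.Perm.decomposeFin.symm (p, e)) = cyc e + if p = 0 then 1 else 0 := by
  set τ := Equiv.Perm.decomposeFin.symm (p, e) with hτ
  by_cases hp : p = 0
  · -- 0 is a fixed point; orbits are those of e plus {0}
    subst hp
    rw [if_pos rfl]
    have hfix : τ 0 = 0 := Equiv.Perm.decomposeFin_symm_apply_zero 0 e
    have hnot : ∀ w : Fin n, ¬ τ.SameCycle 0 w.succ := by
      intro w hw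
      exact Fin.succ_ne_zero w (hw.eq_of_left hfix).symm
    let ψ : Option (Quotient (SameCycle.setoid e)) → Quotient (SameCycle.setoid τ) :=
      fun o => o.elim (Quotient.mk _ 0)
        (Quotient.map' Fin.succ (fun a b hab => succ_sameCycle 0 e hab))
    have hinj : Function.Injective ψ := by
      rintro (_ | a) (_ | b) hab
      · rfl
      · induction b using Quotient.inductionOn' with
        | h b =>
          exact absurd (Quotient.exact' (hab : _ = _)) (hnot b)
      · induction a using Quotient.inductionOn' with
        | h a =>
          exact absurd (Quotient.exact' (hab : _ = _)).symm (hnot a)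
      · induction a using Quotient.inductionOn' with
        | h a =>
          induction b using Quotient.inductionOn' with
          | h b =>
            have : τ.SameCycle a.succ b.succ := Quotient.exact' (hab : _ = _)
            exact congrArg some (Quotient.sound' (sameCycle_of_succ 0 e this))
    have hsurj : Function.Surjective ψ := by
      intro q
      induction q using Quotient.inductionOn' with
      | h z =>
        refine Fin.cases ?_ ?_ z
        · exact ⟨none, rfl⟩
        · intro w; exact ⟨some (Quotient.mk'' w), rfl⟩
    have hcard := Nat.card_congr (Equiv.ofBijective ψ ⟨hinj, hsurj⟩)
    have : Finite (Quotient (SameCycle.setoid e)) := Quotient.finite _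
    have hopt : Nat.card (Option (Quotient (SameCycle.setoid e))) =
        Nat.card (Quotient (SameCycle.setoid e)) + 1 := by
      have := Fintype.ofFinite (Quotient (SameCycle.setoid e))
      rw [Nat.card_eq_fintype_card, Nat.card_eq_fintype_card, Fintype.card_option]
    unfold cyc
    rw [← hcard, hopt]
  · -- 0 gets merged with the cycle of p
    rw [if_neg hp]
    have hz : τ.SameCycle 0 ((p.pred hp).succ) := by
      refine ⟨1, ?_⟩
      simp only [zpow_one]
      rw [show τ (0 : Fin (n+1)) = p from Equiv.Perm.decomposeFin_symm_apply_zero p e]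
      exact (Fin.succ_pred p hp).symm
    let φ : Quotient (SameCycle.setoid e) → Quotient (SameCycle.setoid τ) :=
      Quotient.map' Fin.succ (fun a b hab => succ_sameCycle p e hab)
    have hinj : Function.Injective φ := by
      intro a b hab
      induction a using Quotient.inductionOn' with
      | h a =>
        induction b using Quotient.inductionOn' with
        | h b =>
          have : τ.SameCycle a.succ b.succ := Quotient.exact' (hab : _ = _)
          exact Quotient.sound' (sameCycle_of_succ p e this)
    have hsurj : Function.Surjective φ := by
      intro q
      induction q using Quotient.inductionOn' with
      | h z =>
        refine Fin.cases ?_ ?_ z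
        · exact ⟨Quotient.mk'' (p.pred hp), (Quotient.sound' hz).symm⟩
        · intro w; exact ⟨Quotient.mk'' w, rfl⟩
    unfold cyc
    rw [add_zero, Nat.card_congr (Equiv.ofBijective φ ⟨hinj, hsurj⟩)]


lemma main {R : Type*} [CommRing R] (n : ℕ) (x : R) :
    ∑ σ : Equiv.Perm (Fin n), x ^ cyc σ = ∏ i ∈ Finset.range n, (x + (i : R)) := by
  induction n with
  | zero =>
    have h : ∀ σ : Equiv.Perm (Fin 0), cyc σ = 0 := by
      intro σ
      have : IsEmpty (Quotient (SameCycle.setoid σ)) := by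
        constructor
        intro q
        induction q using Quotient.inductionOn' with
        | h z => exact z.elim0
      exact Nat.card_of_isEmpty
    simp [h]
  | succ m ih =>
    rw [Finset.univ_perm_fin_succ, Finset.sum_map, Finset.prod_range_succ]
    have : ∀ pe : Fin (m + 1) × Equiv.Perm (Fin m),
        x ^ cyc (Equiv.Perm.decomposeFin.symm pe) =
          x ^ cyc pe.2 * (if pe.1 = 0 then x else 1) := by
      rintro ⟨p, e⟩
      rw [cyc_decompose, pow_add]
      by_cases hp : p = 0 <;> simp [hp]
    calc ∑ pe : Fin (m + 1) × Equiv.Perm (Fin m),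
          x ^ cyc (Equiv.Perm.decomposeFin.symm pe)
        = ∑ pe : Fin (m + 1) × Equiv.Perm (Fin m),
            x ^ cyc pe.2 * (if pe.1 = 0 then x else 1) := by
          exact Finset.sum_congr rfl fun pe _ => this pe
      _ = ∑ e : Equiv.Perm (Fin m), ∑ p : Fin (m + 1),
            x ^ cyc e * (if p = 0 then x else 1) := by
          rw [Fintype.sum_prod_type_right]
      _ = ∑ e : Equiv.Perm (Fin m), x ^ cyc e * (x + m) := by
          refine Finset.sum_congr rfl fun e _ => ?_
          rw [← Finset.mul_sum]
          congr 1
          have h1 : ∀ p : Fin (m + 1), (if p = 0 then x else 1)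
              = (if p = 0 then x - 1 else 0) + 1 := by
            intro p; split_ifs <;> ring
          rw [Finset.sum_congr rfl fun p _ => h1 p, Finset.sum_add_distrib,
            Finset.sum_ite_eq' Finset.univ (0 : Fin (m + 1)) (fun _ => x - 1),
            Finset.sum_const, Finset.card_univ, Fintype.card_fin]
          simp only [Finset.mem_univ, if_pos, nsmul_eq_mul, mul_one]
          push_cast
          ring
      _ = (∑ e : Equiv.Perm (Fin m), x ^ cyc e) * (x + m) := by
          rw [← Finset.sum_mul]
      _ = (∏ i ∈ Finset.range m, (x + (i : R))) * (x + (m : R)) := by rw [ih]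

end Stmt6Aux

/-- For `n ≥ 1` and `x` an element of a commutative ring `R`,
`Σ_{σ ∈ Perm (Fin n)} x ^ c(σ) = x (x+1) ⋯ (x + n - 1)`, where `c(σ)` is the number of
orbits of `σ` on `Fin n` (fixed points counted as orbits). -/
theorem stmt6 {R : Type*} [CommRing R] (n : ℕ) (hn : 1 ≤ n) (x : R) :
    ∑ σ : Equiv.Perm (Fin n),
        x ^ (Nat.card (Quotient (Equiv.Perm.SameCycle.setoid σ))) =
      ∏ i ∈ Finset.range n, (x + (i : R)) := by
  exact Stmt6Aux.main n x
end

section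
/- Let f₁, f₂ ∈ 𝔽_q[T] be coprime monic polynomials and let I be a nonzero ideal of 𝒪_E with Norm_{E/𝔽_q(T)}(I) = (f₁f₂). Then there exist unique nonzero ideals I₁ and I₂ of 𝒪_E such that I = I₁I₂, Norm_{E/𝔽_q(T)}(I₁) = (f₁), and Norm_{E/𝔽_q(T)}(I₂) = (f₂). -/
/-! Every ideal of `O_E` divides the extension of its norm, since `N(x) ∈ x O_E`. Hence `I`
divides `(f₁)(f₂) O_E` and splits as `I₁ I₂` with `I₁ ∣ f₁ O_E` and `I₂ ∣ f₂ O_E`. With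
`n = [E : 𝔽_q(T)]`, the norm `N(I₁)` divides `(f₁)ⁿ`, `N(I₂)` divides `(f₂)ⁿ`, and
`N(I₁) N(I₂) = (f₁ f₂)`; coprimality forces `N(I₁) = (f₁)` and `N(I₂) = (f₂)`. For uniqueness,
ideals with coprime norms are coprime: the norm of their sum is the unit ideal, and the sum
divides its extension. -/

namespace Ideal

theorem eq_of_mul_eq_of_isCoprime {R : Type*} [CommRing R] {I₁ I₂ J₁ J₂ : Ideal R}
    (h : I₁ * I₂ = J₁ * J₂) (h₁ : IsCoprime I₁ J₂) (h₂ : IsCoprime J₁ I₂) : I₁ = J₁ :=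
  le_antisymm (le_of_dvd (h₂.dvd_of_dvd_mul_right (h ▸ dvd_mul_right _ _)))
    (le_of_dvd (h₁.dvd_of_dvd_mul_right (h.symm ▸ dvd_mul_right _ _)))

theorem eq_of_mul_eq_of_dvd_pow {R : Type*} [CommRing R] {a b x y : Ideal R} {n : ℕ}
    (hab : IsCoprime a b) (hx : x ∣ a ^ n) (hy : y ∣ b ^ n) (h : x * y = a * b) : x = a :=
  eq_of_mul_eq_of_isCoprime h (hab.pow_left.of_isCoprime_of_dvd_left hx)
    (hab.pow_right.of_isCoprime_of_dvd_right hy)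

variable {R S : Type*} [CommRing R] [IsDedekindDomain R] [CommRing S] [IsDedekindDomain S]
  [Algebra R S] [Module.Finite R S] [Module.IsTorsionFree R S]

theorem dvd_map_relNorm (I : Ideal S) : I ∣ (relNorm R I).map (algebraMap R S) :=
  dvd_iff_le.mpr (map_le_iff_le_comap.mpr (relNorm_le_comap R I))

theorem isCoprime_of_isCoprime_relNorm {P Q : Ideal S}
    (h : IsCoprime (relNorm R P) (relNorm R Q)) : IsCoprime P Q := by
  have hnorm : relNorm R (P ⊔ Q) = ⊤ := isUnit_iff.mp <| h.isUnit_of_dvd'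
    (map_dvd _ (dvd_iff_le.mpr le_sup_left)) (map_dvd _ (dvd_iff_le.mpr le_sup_right))
  rw [isCoprime_iff_sup_eq, ← top_le_iff]
  simpa only [hnorm, map_top] using le_of_dvd (dvd_map_relNorm (R := R) (P ⊔ Q))

theorem exists_mul_eq_relNorm_eq_of_isCoprime {I : Ideal S} {a b : Ideal R}
    (hab : IsCoprime a b) (h : relNorm R I = a * b) :
    ∃ I₁ I₂ : Ideal S, I = I₁ * I₂ ∧ relNorm R I₁ = a ∧ relNorm R I₂ = b := by
  have hdvd : I ∣ a.map (algebraMap R S) * b.map (algebraMap R S) := by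
    simpa only [h, Ideal.map_mul] using dvd_map_relNorm (R := R) I
  obtain ⟨I₁, I₂, h₁, h₂, rfl⟩ := exists_dvd_and_dvd_of_dvd_mul hdvd
  have hN₁ : relNorm R I₁ ∣ a ^ Module.finrank R S := relNorm_algebraMap S a ▸ map_dvd _ h₁
  have hN₂ : relNorm R I₂ ∣ b ^ Module.finrank R S := relNorm_algebraMap S b ▸ map_dvd _ h₂
  rw [map_mul] at h
  refine ⟨I₁, I₂, rfl, eq_of_mul_eq_of_dvd_pow hab hN₁ hN₂ h, ?_⟩
  rw [mul_comm a, mul_comm] at h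
  exact eq_of_mul_eq_of_dvd_pow hab.symm hN₂ hN₁ h

theorem existsUnique_mul_eq_relNorm_eq_of_isCoprime {I : Ideal S} (hI : I ≠ ⊥) {a b : Ideal R}
    (hab : IsCoprime a b) (h : relNorm R I = a * b) :
    ∃! p : Ideal S × Ideal S, p.1 ≠ ⊥ ∧ p.2 ≠ ⊥ ∧ I = p.1 * p.2 ∧
      relNorm R p.1 = a ∧ relNorm R p.2 = b := by
  obtain ⟨I₁, I₂, rfl, h₁, h₂⟩ := exists_mul_eq_relNorm_eq_of_isCoprime hab h
  obtain ⟨hI₁, hI₂⟩ : I₁ ≠ ⊥ ∧ I₂ ≠ ⊥ := by simpa only [Ne, mul_eq_bot, not_or] using hI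
  refine ⟨(I₁, I₂), ⟨hI₁, hI₂, rfl, h₁, h₂⟩, ?_⟩
  rintro ⟨J₁, J₂⟩ ⟨-, -, hJ, hJ₁, hJ₂⟩
  obtain rfl : I₁ = J₁ := eq_of_mul_eq_of_isCoprime hJ
    (isCoprime_of_isCoprime_relNorm (by rwa [h₁, hJ₂]))
    (isCoprime_of_isCoprime_relNorm (by rwa [hJ₁, h₂]))
  exact Prod.ext rfl (mul_left_cancel₀ hI₁ hJ).symm

end Ideal

theorem stmt11_general
    (Fq : Type*) [Field Fq]
    (E : Type*) [Field E]
    [Algebra (Polynomial Fq) E]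
    [IsDedekindDomain ↥(integralClosure (Polynomial Fq) E)]
    [Module.Finite (Polynomial Fq) ↥(integralClosure (Polynomial Fq) E)]
    [Module.Free (Polynomial Fq) ↥(integralClosure (Polynomial Fq) E)]
    (f₁ f₂ : Polynomial Fq) (hcop : IsCoprime f₁ f₂)
    (I : Ideal ↥(integralClosure (Polynomial Fq) E)) (hI : I ≠ ⊥)
    (hnorm : Ideal.relNorm (Polynomial Fq) I = Ideal.span {f₁ * f₂}) :
    ∃! p : Ideal ↥(integralClosure (Polynomial Fq) E) × Ideal ↥(integralClosure (Polynomial Fq) E),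
      p.1 ≠ ⊥ ∧ p.2 ≠ ⊥ ∧ I = p.1 * p.2 ∧
      Ideal.relNorm (Polynomial Fq) p.1 = Ideal.span {f₁} ∧
      Ideal.relNorm (Polynomial Fq) p.2 = Ideal.span {f₂} :=
  Ideal.existsUnique_mul_eq_relNorm_eq_of_isCoprime hI
    ((Ideal.isCoprime_span_singleton_iff f₁ f₂).mpr hcop)
    (hnorm.trans (Ideal.span_singleton_mul_span_singleton f₁ f₂).symm)

/-- Let `f₁, f₂ ∈ Fq[T]` be coprime monic polynomials and `I` a nonzero
ideal of `O_E` with norm `(f₁f₂)`.  Then there is a unique pair of nonzero ideals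
`(I₁, I₂)` of `O_E` with `I = I₁I₂`, `Norm I₁ = (f₁)` and `Norm I₂ = (f₂)`. -/
theorem stmt11
    (Fq : Type*) [Field Fq] [Fintype Fq]
    (E : Type*) [Field E] [Algebra (RatFunc Fq) E]
    [FiniteDimensional (RatFunc Fq) E] [IsGalois (RatFunc Fq) E]
    [Algebra (Polynomial Fq) E] [IsScalarTower (Polynomial Fq) (RatFunc Fq) E]
    [Algebra Fq E] [IsScalarTower Fq (Polynomial Fq) E]
    [IsDedekindDomain ↥(integralClosure (Polynomial Fq) E)]
    [Module.Finite (Polynomial Fq) ↥(integralClosure (Polynomial Fq) E)]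
    [Module.Free (Polynomial Fq) ↥(integralClosure (Polynomial Fq) E)]
    (hgeo : ∀ x : E, IsAlgebraic Fq x → ∃ c : Fq, algebraMap Fq E c = x)
    (f₁ f₂ : Polynomial Fq) (h₁ : f₁.Monic) (h₂ : f₂.Monic) (hcop : IsCoprime f₁ f₂)
    (I : Ideal ↥(integralClosure (Polynomial Fq) E)) (hI : I ≠ ⊥)
    (hnorm : Ideal.relNorm (Polynomial Fq) I = Ideal.span {f₁ * f₂}) :
    ∃! p : Ideal ↥(integralClosure (Polynomial Fq) E) × Ideal ↥(integralClosure (Polynomial Fq) E),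
      p.1 ≠ ⊥ ∧ p.2 ≠ ⊥ ∧ I = p.1 * p.2 ∧
      Ideal.relNorm (Polynomial Fq) p.1 = Ideal.span {f₁} ∧
      Ideal.relNorm (Polynomial Fq) p.2 = Ideal.span {f₂} :=
  stmt11_general Fq E f₁ f₂ hcop I hI hnorm
end
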